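/- Let x₀⁽¹⁾ ≥ 0 and x₀⁽²⁾ ≥ 0 be reals and let z = (z_k)_{k≥1} be a sequence of nonnegative reals with ∑_{k≥1} k·z_k < ∞. Assume ∑_{k≥1} k·z_k + (x₀⁽¹⁾ − x₀⁽²⁾) > 2·∑_{k≥1} z_k, and that x₀⁽²⁾ > 0 or z_1 > 0. Then there exists a unique β ∈ (0,1) such that ∑_{k≥1} k·z_k = (1 − β²)·∑_{k≥1} k·z_k/(1 − β^k) + x₀⁽²⁾ − β²·x₀⁽¹⁾. -/

import Mathlib

/-!
Write `aₖ = (k + 1) z_{k+1}`. For `0 < β < 1` the right-hand side minus the left-hand side of the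
equation is `β h(β)` with `h(β) = a₀ + x₂ / β - β x₁ - ∑ₙ aₙ₊₂ (β - β^(n+2)) / (1 - β^(n+3))`.
Each ratio `(β - β^m) / (1 - β^(m+1))` is increasing on `[0, 1)`: after clearing denominators this
is `(b^m - a^m)(1 - ab) < (b - a)(1 - (ab)^m)`, obtained by pairing the terms of `∑ b^j a^(m-1-j)`
and `∑ (ab)^j`. Hence `h` is decreasing, strictly unless `x₁ = 0` and `z_k = 0` for `k ≥ 3`.
Since `a₀ + x₂ > 0`, `h` is positive near `0`, while the hypothesis on `∑ k z_k - 2 ∑ z_k` says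
exactly that `h(1) < 0`, which also excludes the non-strict case. The intermediate value theorem
gives the root, strict monotonicity its uniqueness.
-/

open Finset Set

/-- Equal to `(β - β^(n+2)) / (1 - β^(n+3))` for `β ≠ 1` (`geomRatio_eq_div`); the geometric-sum
form makes it continuous at `β = 1`. -/
noncomputable def geomRatio (n : ℕ) (β : ℝ) : ℝ :=
  β * (∑ j ∈ range (n + 1), β ^ j) / ∑ j ∈ range (n + 3), β ^ j

section GeomRatio

variable {n : ℕ} {β : ℝ}

lemma geomRatio_nonneg (hβ : 0 ≤ β) : 0 ≤ geomRatio n β := by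
  unfold geomRatio; positivity

lemma geomRatio_le_self (hβ : 0 ≤ β) : geomRatio n β ≤ β := by
  have hS : ∑ j ∈ range (n + 1), β ^ j ≤ ∑ j ∈ range (n + 3), β ^ j :=
    sum_le_sum_of_subset_of_nonneg (range_subset_range.2 (by omega))
      fun j _ _ => pow_nonneg hβ j
  rw [geomRatio, mul_div_assoc]
  exact mul_le_of_le_one_right hβ <|
    div_le_one_of_le₀ hS (sum_nonneg fun j _ => pow_nonneg hβ j)

lemma geomRatio_one : geomRatio n 1 = ((n : ℝ) + 1) / ((n : ℝ) + 3) := by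
  simp [geomRatio]

lemma geomRatio_eq_div (hβ : β ≠ 1) :
    geomRatio n β = (β - β ^ (n + 2)) / (1 - β ^ (n + 3)) := by
  have h₁ : 1 - β ≠ 0 := sub_ne_zero.2 hβ.symm
  rw [geomRatio, ← mul_div_mul_left _ _ h₁, ← mul_assoc, mul_comm (1 - β) β, mul_assoc,
    mul_neg_geom_sum, mul_neg_geom_sum]
  ring

lemma one_sub_sq_div_one_sub_pow (hβ₀ : 0 ≤ β) (hβ₁ : β < 1) :
    (1 - β ^ 2) / (1 - β ^ (n + 3)) = 1 - β * geomRatio n β := by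
  have hd : 1 - β ^ (n + 3) ≠ 0 := (sub_pos.2 (pow_lt_one₀ hβ₀ hβ₁ (by omega))).ne'
  rw [geomRatio_eq_div hβ₁.ne]
  field_simp
  ring

lemma continuousOn_geomRatio : ContinuousOn (geomRatio n) (Ici 0) :=
  ((continuous_id.mul (continuous_finsetSum _ fun j _ => continuous_pow j)).continuousOn).div
    (continuous_finsetSum _ fun j _ => continuous_pow j).continuousOn
    fun _ hβ => (geom_sum_pos hβ (by omega)).ne'

end GeomRatio

section Elementary

variable {a b : ℝ}

lemma pow_mul_pow_add_pow_mul_pow_le (ha₀ : 0 ≤ a) (ha₁ : a ≤ 1) (hb₀ : 0 ≤ b) (hb₁ : b ≤ 1)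
    (i j : ℕ) : b ^ i * a ^ j + b ^ j * a ^ i ≤ (b * a) ^ i + (b * a) ^ j := by
  wlog hij : i ≤ j generalizing i j
  · linarith [this j i (le_of_not_ge hij)]
  obtain ⟨t, rfl⟩ := Nat.exists_eq_add_of_le hij
  have h : a ^ t + b ^ t ≤ 1 + a ^ t * b ^ t := by
    nlinarith [pow_le_one₀ ha₀ ha₁ (n := t), pow_le_one₀ hb₀ hb₁ (n := t)]
  calc b ^ i * a ^ (i + t) + b ^ (i + t) * a ^ i = (b * a) ^ i * (a ^ t + b ^ t) := by ring
    _ ≤ (b * a) ^ i * (1 + a ^ t * b ^ t) := by gcongr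
    _ = (b * a) ^ i + (b * a) ^ (i + t) := by ring

lemma sum_pow_mul_pow_lt_geom_sum (ha₀ : 0 ≤ a) (ha₁ : a < 1) (hb₀ : 0 ≤ b) (hb₁ : b < 1)
    {m : ℕ} (hm : 2 ≤ m) :
    ∑ j ∈ range m, b ^ j * a ^ (m - 1 - j) < ∑ j ∈ range m, (b * a) ^ j := by
  set g : ℕ → ℝ := fun j => b ^ j * a ^ (m - 1 - j)
  set h : ℕ → ℝ := fun j => (b * a) ^ j
  suffices ∑ j ∈ range m, (g j + g (m - 1 - j)) < ∑ j ∈ range m, (h j + h (m - 1 - j)) by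
    rwa [sum_add_distrib, sum_add_distrib, sum_range_reflect g, sum_range_reflect h,
      ← two_mul, ← two_mul, mul_lt_mul_iff_right₀ two_pos] at this
  refine sum_lt_sum (fun j hj => ?_) ⟨0, mem_range.2 (by omega), ?_⟩
  · simp only [g, h, Nat.sub_sub_self (Nat.le_sub_one_of_lt (mem_range.1 hj))]
    exact pow_mul_pow_add_pow_mul_pow_le ha₀ ha₁.le hb₀ hb₁.le _ _
  · have ha : a ^ (m - 1) < 1 := pow_lt_one₀ ha₀ ha₁ (by omega)
    have hb : b ^ (m - 1) < 1 := pow_lt_one₀ hb₀ hb₁ (by omega)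
    simp only [g, h, pow_zero, one_mul, mul_one, Nat.sub_zero, Nat.sub_self, mul_pow]
    nlinarith

lemma sub_pow_mul_lt_sub_mul (ha₀ : 0 ≤ a) (hab : a < b) (hb₁ : b < 1) {m : ℕ} (hm : 2 ≤ m) :
    (b ^ m - a ^ m) * (1 - a * b) < (b - a) * (1 - (a * b) ^ m) := by
  have hsum := sum_pow_mul_pow_lt_geom_sum ha₀ (hab.trans hb₁) (ha₀.trans hab.le) hb₁ hm
  rw [mul_comm b a] at hsum
  rw [← geom_sum₂_mul, ← mul_neg_geom_sum]
  have : 0 < (b - a) * (1 - a * b) := mul_pos (by linarith) (by nlinarith)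
  nlinarith

end Elementary

lemma geomRatio_strictMonoOn (n : ℕ) : StrictMonoOn (geomRatio n) (Ico 0 1) := by
  intro a ⟨ha₀, ha₁⟩ b ⟨hb₀, hb₁⟩ hab
  have hda : 0 < 1 - a ^ (n + 3) := sub_pos.2 (pow_lt_one₀ ha₀ ha₁ (by omega))
  have hdb : 0 < 1 - b ^ (n + 3) := sub_pos.2 (pow_lt_one₀ hb₀ hb₁ (by omega))
  rw [geomRatio_eq_div ha₁.ne, geomRatio_eq_div hb₁.ne, div_lt_div_iff₀ hda hdb]
  have key := sub_pow_mul_lt_sub_mul ha₀ hab hb₁ (m := n + 2) (by omega)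
  linear_combination key

lemma tsum_eq_add_add_tsum_add_two {f : ℕ → ℝ} (hf : Summable f) :
    ∑' n, f n = f 0 + f 1 + ∑' n, f (n + 2) := by
  rw [← hf.sum_add_tsum_nat_add 2, sum_range_succ, sum_range_one]

section Series

variable {c : ℕ → ℝ} {β : ℝ}

lemma summable_mul_geomRatio (hs : Summable c) (hβ : 0 ≤ β) :
    Summable fun n => c n * geomRatio n β := by
  refine (hs.abs.mul_right β).of_norm_bounded fun n => ?_
  rw [Real.norm_eq_abs, abs_mul, abs_of_nonneg (geomRatio_nonneg hβ)]
  exact mul_le_mul_of_nonneg_left (geomRatio_le_self hβ) (abs_nonneg _)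

lemma tsum_mul_geomRatio_le (hc : ∀ n, 0 ≤ c n) (hs : Summable c) (hβ : 0 ≤ β) :
    ∑' n, c n * geomRatio n β ≤ β * ∑' n, c n := by
  rw [← tsum_mul_left]
  exact (summable_mul_geomRatio hs hβ).tsum_le_tsum
    (fun n => by rw [mul_comm β]; exact mul_le_mul_of_nonneg_left (geomRatio_le_self hβ) (hc n))
    (hs.mul_left β)

lemma continuousOn_tsum_mul_geomRatio (hc : ∀ n, 0 ≤ c n) (hs : Summable c) :
    ContinuousOn (fun β => ∑' n, c n * geomRatio n β) (Icc 0 1) := by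
  have hbound (n : ℕ) (β : ℝ) (hβ : β ∈ Icc (0 : ℝ) 1) : ‖c n * geomRatio n β‖ ≤ c n := by
    rw [Real.norm_eq_abs, abs_of_nonneg (mul_nonneg (hc n) (geomRatio_nonneg hβ.1))]
    exact mul_le_of_le_one_right (hc n) ((geomRatio_le_self hβ.1).trans hβ.2)
  exact (tendstoUniformlyOn_tsum hs hbound).continuousOn <| Filter.Frequently.of_forall
    fun t => continuousOn_finsetSum t fun n _ =>
      continuousOn_const.mul (continuousOn_geomRatio.mono Icc_subset_Ici_self)

lemma monotoneOn_tsum_mul_geomRatio (hc : ∀ n, 0 ≤ c n) (hs : Summable c) :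
    MonotoneOn (fun β => ∑' n, c n * geomRatio n β) (Ico 0 1) := by
  intro a ha b hb hab
  exact (summable_mul_geomRatio hs ha.1).tsum_le_tsum
    (fun n => mul_le_mul_of_nonneg_left ((geomRatio_strictMonoOn n).monotoneOn ha hb hab) (hc n))
    (summable_mul_geomRatio hs hb.1)

lemma strictMonoOn_tsum_mul_geomRatio (hc : ∀ n, 0 ≤ c n) (hs : Summable c)
    (hpos : ∃ n, 0 < c n) : StrictMonoOn (fun β => ∑' n, c n * geomRatio n β) (Ico 0 1) := by
  obtain ⟨m, hm⟩ := hpos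
  intro a ha b hb hab
  exact (summable_mul_geomRatio hs ha.1).tsum_lt_tsum
    (fun n => mul_le_mul_of_nonneg_left ((geomRatio_strictMonoOn n).monotoneOn ha hb hab.le)
      (hc n))
    (mul_lt_mul_of_pos_left (geomRatio_strictMonoOn m ha hb hab) hm)
    (summable_mul_geomRatio hs hb.1)

end Series

/-- The function `h` of the proof: `β h(β)` is the right-hand side minus the left-hand side of the
equation (`one_sub_sq_mul_tsum_div_add_sub_eq`). -/
noncomputable def defect (a : ℕ → ℝ) (x₁ x₂ β : ℝ) : ℝ :=
  a 0 + x₂ / β - β * x₁ - ∑' n, a (n + 2) * geomRatio n β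

section Defect

variable {a : ℕ → ℝ} {x₁ x₂ β : ℝ}

lemma summable_div_one_sub_pow (hs : Summable a) (hβ₀ : 0 ≤ β) (hβ₁ : β < 1) :
    Summable fun k => a k / (1 - β ^ (k + 1)) := by
  refine (hs.abs.div_const (1 - β)).of_norm_bounded fun k => ?_
  have hd : 1 - β ≤ 1 - β ^ (k + 1) := by
    have := pow_le_of_le_one hβ₀ hβ₁.le (n := k + 1) (by omega); linarith
  rw [Real.norm_eq_abs, abs_div, abs_of_pos (sub_pos.2 hβ₁ |>.trans_le hd)]
  exact div_le_div_of_nonneg_left (abs_nonneg (a k)) (sub_pos.2 hβ₁) hd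

lemma one_sub_sq_mul_tsum_div_add_sub_eq (hs : Summable a) (hβ₀ : 0 < β) (hβ₁ : β < 1) :
    (1 - β ^ 2) * ∑' k, a k / (1 - β ^ (k + 1)) + x₂ - β ^ 2 * x₁
      = ∑' k, a k + β * defect a x₁ x₂ β := by
  set g : ℕ → ℝ := fun k => (1 - β ^ 2) * (a k / (1 - β ^ (k + 1))) - a k
  have hg : Summable g := ((summable_div_one_sub_pow hs hβ₀.le hβ₁).mul_left _).sub hs
  have hg₀ : g 0 = β * a 0 := by
    have : 1 - β ≠ 0 := by linarith
    simp only [g, zero_add, pow_one]; field_simp; ring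
  have hg₁ : g 1 = 0 := by
    have : 1 - β ^ 2 ≠ 0 := by nlinarith
    simp only [g]; field_simp; ring
  have hg₂ (n : ℕ) : g (n + 2) = -β * (a (n + 2) * geomRatio n β) := by
    calc (1 - β ^ 2) * (a (n + 2) / (1 - β ^ (n + 3))) - a (n + 2)
        = a (n + 2) * ((1 - β ^ 2) / (1 - β ^ (n + 3)) - 1) := by ring
      _ = -β * (a (n + 2) * geomRatio n β) := by
        rw [one_sub_sq_div_one_sub_pow hβ₀.le hβ₁]; ring
  have hsplit : (1 - β ^ 2) * ∑' k, a k / (1 - β ^ (k + 1)) = ∑' k, a k + ∑' k, g k := by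
    rw [← tsum_mul_left, ← hs.tsum_add hg]
    exact tsum_congr fun k => by ring
  rw [hsplit, tsum_eq_add_add_tsum_add_two hg, hg₀, hg₁, tsum_congr hg₂, tsum_mul_left, defect]
  field_simp
  ring

lemma defect_one_neg (hs : Summable a)
    (h : ∑' k, a k + (x₁ - x₂) > 2 * ∑' k, a k / ((k + 1 : ℕ) : ℝ)) :
    defect a x₁ x₂ 1 < 0 := by
  have hs' : Summable fun k => a k / ((k + 1 : ℕ) : ℝ) := by
    refine hs.abs.of_norm_bounded fun k => ?_
    rw [Real.norm_eq_abs, abs_div, Nat.abs_cast]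
    exact div_le_self (abs_nonneg _) (by simp)
  set g : ℕ → ℝ := fun k => a k - 2 * (a k / ((k + 1 : ℕ) : ℝ))
  have hg : Summable g := hs.sub (hs'.mul_left 2)
  have hg₂ (n : ℕ) : g (n + 2) = a (n + 2) * geomRatio n 1 := by
    simp only [g, geomRatio_one]; push_cast; field_simp; ring
  have hsum : ∑' k, g k = -a 0 + ∑' n, a (n + 2) * geomRatio n 1 := by
    rw [tsum_eq_add_add_tsum_add_two hg, tsum_congr hg₂]; simp only [g]; norm_num; ring
  have : ∑' k, g k = ∑' k, a k - 2 * ∑' k, a k / ((k + 1 : ℕ) : ℝ) := by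
    rw [hs.tsum_sub (hs'.mul_left 2), tsum_mul_left]
  rw [defect]
  linarith

lemma defect_pos (hx₂ : 0 ≤ x₂) (ha : ∀ n, 0 ≤ a n) (hs : Summable a) (hβ₀ : 0 < β)
    (hβ₁ : β ≤ 1) (h : β * (x₁ + ∑' n, a (n + 2)) < a 0 + x₂) : 0 < defect a x₁ x₂ β := by
  have hx₂β : x₂ ≤ x₂ / β := le_div_self hx₂ hβ₀ hβ₁
  have := tsum_mul_geomRatio_le (fun n => ha (n + 2)) ((summable_nat_add_iff 2).2 hs) hβ₀.le
  rw [defect]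
  linarith

lemma continuousOn_defect (ha : ∀ n, 0 ≤ a n) (hs : Summable a) :
    ContinuousOn (defect a x₁ x₂) (Ioc 0 1) :=
  ((continuousOn_const.add (continuousOn_const.div continuousOn_id fun _ hβ => hβ.1.ne')).sub
    (continuousOn_id.mul continuousOn_const)).sub
    ((continuousOn_tsum_mul_geomRatio (fun n => ha (n + 2))
      ((summable_nat_add_iff 2).2 hs)).mono Ioc_subset_Icc_self)

lemma defect_strictAntiOn (hx₁ : 0 ≤ x₁) (hx₂ : 0 ≤ x₂) (ha : ∀ n, 0 ≤ a n) (hs : Summable a)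
    (h : 0 < x₁ ∨ ∃ n, 0 < a (n + 2)) : StrictAntiOn (defect a x₁ x₂) (Ioo 0 1) := by
  have hT := monotoneOn_tsum_mul_geomRatio (fun n => ha (n + 2)) ((summable_nat_add_iff 2).2 hs)
  intro β hβ γ hγ hβγ
  have hx₂βγ : x₂ / γ ≤ x₂ / β := div_le_div_of_nonneg_left hx₂ hβ.1 hβγ.le
  have hT' := hT ⟨hβ.1.le, hβ.2⟩ ⟨hγ.1.le, hγ.2⟩ hβγ.le
  simp only [defect]
  rcases h with hx₁ | hpos
  · have : β * x₁ < γ * x₁ := mul_lt_mul_of_pos_right hβγ hx₁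
    linarith
  · have := strictMonoOn_tsum_mul_geomRatio (fun n => ha (n + 2))
      ((summable_nat_add_iff 2).2 hs) hpos ⟨hβ.1.le, hβ.2⟩ ⟨hγ.1.le, hγ.2⟩ hβγ
    have : β * x₁ ≤ γ * x₁ := mul_le_mul_of_nonneg_right hβγ.le hx₁
    linarith

lemma pos_or_exists_pos_of_defect_one_neg (hx₁ : 0 ≤ x₁) (hx₂ : 0 ≤ x₂) (ha : ∀ n, 0 ≤ a n)
    (h : defect a x₁ x₂ 1 < 0) : 0 < x₁ ∨ ∃ n, 0 < a (n + 2) := by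
  by_contra! hcon
  have hx₁ : x₁ = 0 := le_antisymm hcon.1 hx₁
  have hT : ∀ n, a (n + 2) * geomRatio n 1 = 0 := fun n => by
    rw [le_antisymm (hcon.2 n) (ha (n + 2)), zero_mul]
  rw [defect, tsum_congr hT, tsum_zero, hx₁] at h
  linarith [ha 0]

lemma existsUnique_defect_eq_zero (hx₁ : 0 ≤ x₁) (hx₂ : 0 ≤ x₂) (ha : ∀ n, 0 ≤ a n)
    (hs : Summable a) (hpos : 0 < a 0 + x₂) (hneg : defect a x₁ x₂ 1 < 0) :
    ∃! β, β ∈ Set.Ioo 0 1 ∧ defect a x₁ x₂ β = 0 := by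
  set L := x₁ + ∑' n, a (n + 2)
  have hL : 0 ≤ L := add_nonneg hx₁ (tsum_nonneg fun n => ha (n + 2))
  obtain ⟨ε, hε, hεL⟩ := exists_pos_mul_lt hpos L
  set δ := min ε (1 / 2)
  have hδ₀ : 0 < δ := lt_min hε one_half_pos
  have hδ₁ : δ < 1 := (min_le_right _ _).trans_lt one_half_lt_one
  have hδ : 0 < defect a x₁ x₂ δ := defect_pos hx₂ ha hs hδ₀ hδ₁.le <| by
    calc δ * L ≤ ε * L := mul_le_mul_of_nonneg_right (min_le_left _ _) hL
      _ < a 0 + x₂ := by rwa [mul_comm]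
  obtain ⟨β, hβ, hβ0⟩ := intermediate_value_Ioo' hδ₁.le
    ((continuousOn_defect ha hs).mono (Icc_subset_Ioc_iff hδ₁.le |>.2 ⟨hδ₀, le_rfl⟩))
    ⟨hneg, hδ⟩
  refine ⟨β, ⟨⟨hδ₀.trans hβ.1, hβ.2⟩, hβ0⟩, fun γ hγ => ?_⟩
  exact (defect_strictAntiOn hx₁ hx₂ ha hs
    (pos_or_exists_pos_of_defect_one_neg hx₁ hx₂ ha hneg)).injOn hγ.1
    ⟨hδ₀.trans hβ.1, hβ.2⟩ (hγ.2.trans hβ0.symm)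

end Defect

/-- Let x₀⁽¹⁾, x₀⁽²⁾ ≥ 0 and z = (z_k)_{k≥1} nonnegative with
∑ k·z_k < ∞. Assume ∑ k·z_k + (x₀⁽¹⁾ − x₀⁽²⁾) > 2·∑ z_k and (x₀⁽²⁾ > 0 or z_1 > 0).
Then there is a unique β ∈ (0,1) with
∑ k·z_k = (1 − β²)·∑ k·z_k/(1 − β^k) + x₀⁽²⁾ − β²·x₀⁽¹⁾. -/
theorem stmt6 (x1 x2 : ℝ) (hx1 : 0 ≤ x1) (hx2 : 0 ≤ x2)
    (z : ℕ → ℝ) (hz : ∀ k, 1 ≤ k → 0 ≤ z k)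
    (hsum : Summable (fun k : ℕ => ((k + 1 : ℕ) : ℝ) * z (k + 1)))
    (hgt : (∑' k : ℕ, ((k + 1 : ℕ) : ℝ) * z (k + 1)) + (x1 - x2) >
      2 * ∑' k : ℕ, z (k + 1))
    (hpos : 0 < x2 ∨ 0 < z 1) :
    ∃! β : ℝ, β ∈ Set.Ioo (0 : ℝ) 1 ∧
      (∑' k : ℕ, ((k + 1 : ℕ) : ℝ) * z (k + 1)) =
        (1 - β ^ 2) * (∑' k : ℕ, ((k + 1 : ℕ) : ℝ) * z (k + 1) / (1 - β ^ (k + 1))) +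
          x2 - β ^ 2 * x1 := by
  set a : ℕ → ℝ := fun k => ((k + 1 : ℕ) : ℝ) * z (k + 1)
  have ha (k : ℕ) : 0 ≤ a k := mul_nonneg (Nat.cast_nonneg _) (hz (k + 1) (by omega))
  have hza (k : ℕ) : a k / ((k + 1 : ℕ) : ℝ) = z (k + 1) :=
    mul_div_cancel_left₀ _ (Nat.cast_ne_zero.2 k.succ_ne_zero)
  have hneg : defect a x1 x2 1 < 0 := defect_one_neg hsum (by rwa [tsum_congr hza])
  have hz₁x₂ : 0 < a 0 + x2 := by
    have : a 0 = z 1 := by simp [a]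
    rcases hpos with h | h <;> linarith [hz 1 le_rfl]
  have hiff {β : ℝ} (hβ : β ∈ Set.Ioo (0 : ℝ) 1) :
      (∑' k, a k = (1 - β ^ 2) * (∑' k, a k / (1 - β ^ (k + 1))) + x2 - β ^ 2 * x1) ↔
        defect a x1 x2 β = 0 := by
    rw [one_sub_sq_mul_tsum_div_add_sub_eq hsum hβ.1 hβ.2, left_eq_add,
      mul_eq_zero, or_iff_right hβ.1.ne']
  obtain ⟨β, ⟨hβ, hβ0⟩, huniq⟩ :=
    existsUnique_defect_eq_zero hx1 hx2 ha hsum hz₁x₂ hneg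
  exact ⟨β, ⟨hβ, (hiff hβ).2 hβ0⟩, fun γ ⟨hγ, hγeq⟩ => huniq γ ⟨hγ, (hiff hγ).1 hγeq⟩⟩
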